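/- arXiv:2302.07454 — 5 statements merged into one kernel-verified Lean document; each statement's English description precedes it below -/
import Mathlib

section
/- If the conditional distribution O on a finite set Ξ is uniformly diagonally dominant, i.e., min_{ξ∈Ξ} O(ξ|ξ) > |Ξ| · max_{ξ≠ξ'} O(ξ'|ξ), then there exists a constant c₀ ∈ (0,∞) such that for all probability distributions Q, P on Ξ, d_TV(Q, P) ≤ c₀ · d_TV(O⋆Q, O⋆P), where (O⋆Q)(ξ') = Σ_ξ O(ξ'|ξ)Q(ξ). -/
/-!
Write `n = |Ξ|`. In column `ξ` every off-diagonal entry is at most `O(ξ|ξ)/n`, so the column sum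
`1` is at most `O(ξ|ξ) + (n-1)/n · O(ξ|ξ)`, i.e. `O(ξ|ξ) ≥ n/(2n-1)`: the diagonal entry exceeds the
off-diagonal mass of its column by `2 O(ξ|ξ) - 1 ≥ 1/(2n-1)`. For any signed vector `D`, isolating
the diagonal term in each coordinate of `O D` and summing gives
`‖O D‖₁ ≥ ∑_ξ (2 O(ξ|ξ) - 1) |D ξ| ≥ ‖D‖₁/(2n-1)`; apply this to `D = Q - P` with `c₀ = 2n - 1`.
-/

open Finset

theorem two_mul_abs_sub_sum_abs_le_abs_sum {ι : Type*} [Fintype ι] (f : ι → ℝ) (i : ι) :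
    2 * |f i| - ∑ j, |f j| ≤ |∑ j, f j| := by
  classical
  rw [← add_sum_erase univ f (mem_univ i), ← add_sum_erase univ (|f ·|) (mem_univ i)]
  have h_rest := abs_sum_le_sum_abs f (univ.erase i)
  have h_tri := abs_sub_abs_le_abs_add (f i) (∑ j ∈ univ.erase i, f j)
  linarith

theorem sum_two_mul_abs_diag_sub_sum_abs_mul_abs_le {ι : Type*} [Fintype ι]
    (O : ι → ι → ℝ) (D : ι → ℝ) :
    ∑ j, (2 * |O j j| - ∑ i, |O i j|) * |D j| ≤ ∑ i, |∑ j, O i j * D j| := by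
  calc ∑ j, (2 * |O j j| - ∑ i, |O i j|) * |D j|
      = ∑ i, (2 * |O i i * D i| - ∑ j, |O i j * D j|) := by
        simp only [sub_mul, sum_sub_distrib, sum_mul, abs_mul, mul_assoc, ← mul_sum]
        rw [sum_comm]
    _ ≤ ∑ i, |∑ j, O i j * D j| :=
        sum_le_sum fun i _ => two_mul_abs_sub_sum_abs_le_abs_sum (fun j => O i j * D j) i

theorem card_le_two_mul_card_sub_one_mul_diag {ι : Type*} [Fintype ι]
    (O : ι → ι → ℝ) (hO_sum : ∀ j, ∑ i, O i j = 1)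
    (hdom : ∀ i j, i ≠ j → (Fintype.card ι : ℝ) * O i j ≤ O j j) (j : ι) :
    (Fintype.card ι : ℝ) ≤ (2 * Fintype.card ι - 1) * O j j := by
  classical
  have h_off : ∑ i ∈ univ.erase j, (Fintype.card ι : ℝ) * O i j
      ≤ ((Fintype.card ι : ℝ) - 1) * O j j := by
    calc ∑ i ∈ univ.erase j, (Fintype.card ι : ℝ) * O i j
        ≤ ∑ _i ∈ univ.erase j, O j j := sum_le_sum fun i hi => hdom i j (ne_of_mem_erase hi)
      _ = ((Fintype.card ι : ℝ) - 1) * O j j := by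
        rw [sum_const, card_erase_of_mem (mem_univ j), card_univ, nsmul_eq_mul,
          Nat.cast_pred (Fintype.card_pos_iff.mpr ⟨j⟩)]
  have h_col := hO_sum j
  rw [← add_sum_erase univ _ (mem_univ j)] at h_col
  rw [← mul_sum] at h_off
  nlinarith

theorem sum_abs_le_mul_sum_abs_mulVec {ι : Type*} [Fintype ι] [Nonempty ι]
    (O : ι → ι → ℝ) (hO_nonneg : ∀ i j, 0 ≤ O i j) (hO_sum : ∀ j, ∑ i, O i j = 1)
    (hdom : ∀ i j, i ≠ j → (Fintype.card ι : ℝ) * O i j ≤ O j j) (D : ι → ℝ) :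
    ∑ j, |D j| ≤ (2 * Fintype.card ι - 1) * ∑ i, |∑ j, O i j * D j| := by
  have h_gap (j : ι) : 1 ≤ (2 * Fintype.card ι - 1) * (2 * |O j j| - ∑ i, |O i j|) := by
    simp only [abs_of_nonneg (hO_nonneg _ _), hO_sum]
    linarith [card_le_two_mul_card_sub_one_mul_diag O hO_sum hdom j]
  calc ∑ j, |D j|
      ≤ ∑ j, (2 * Fintype.card ι - 1) * (2 * |O j j| - ∑ i, |O i j|) * |D j| :=
        sum_le_sum fun j _ => le_mul_of_one_le_left (abs_nonneg _) (h_gap j)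
    _ = (2 * Fintype.card ι - 1) * ∑ j, (2 * |O j j| - ∑ i, |O i j|) * |D j| := by
        simp only [mul_sum, mul_assoc]
    _ ≤ (2 * Fintype.card ι - 1) * ∑ i, |∑ j, O i j * D j| := by
        have h_card : (1 : ℝ) ≤ Fintype.card ι := by exact_mod_cast Fintype.card_pos
        exact mul_le_mul_of_nonneg_left (sum_two_mul_abs_diag_sub_sum_abs_mul_abs_le O D)
          (by linarith)

theorem stmt0_general {Ξ : Type*} [Fintype Ξ] [Nonempty Ξ]
    (O : Ξ → Ξ → ℝ)  -- `O ξ' ξ` denotes O(ξ'|ξ)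
    (hO_nonneg : ∀ ξ' ξ, 0 ≤ O ξ' ξ)
    (hO_sum : ∀ ξ, ∑ ξ', O ξ' ξ = 1)
    -- uniform diagonal dominance: min_ξ O(ξ|ξ) > |Ξ| · max_{ξ₁ ≠ ξ₂} O(ξ₂|ξ₁)
    (hdd : ∀ ξ ξ₁ ξ₂, ξ₁ ≠ ξ₂ → (Fintype.card Ξ : ℝ) * O ξ₂ ξ₁ < O ξ ξ) :
    ∃ c₀ : ℝ, 0 < c₀ ∧ ∀ Q P : Ξ → ℝ,
      (∀ ξ, 0 ≤ Q ξ) → (∑ ξ, Q ξ = 1) → (∀ ξ, 0 ≤ P ξ) → (∑ ξ, P ξ = 1) →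
      (1/2) * ∑ ξ, |Q ξ - P ξ| ≤
        c₀ * ((1/2) * ∑ ξ', |(∑ ξ, O ξ' ξ * Q ξ) - (∑ ξ, O ξ' ξ * P ξ)|) := by
  have h_card : (1 : ℝ) ≤ Fintype.card Ξ := by exact_mod_cast Fintype.card_pos
  refine ⟨2 * Fintype.card Ξ - 1, by linarith, fun Q P _ _ _ _ => ?_⟩
  have h_bound := sum_abs_le_mul_sum_abs_mulVec O hO_nonneg hO_sum
    (fun i j hij => (hdd j j i hij.symm).le) (Q - P)
  simp only [Pi.sub_apply, mul_sub, sum_sub_distrib] at h_bound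
  linarith

/-- TV contraction lemma under uniform diagonal dominance. -/
theorem stmt0 {Ξ : Type*} [Fintype Ξ] [DecidableEq Ξ] [Nonempty Ξ]
    (O : Ξ → Ξ → ℝ)  -- `O ξ' ξ` denotes O(ξ'|ξ)
    (hO_nonneg : ∀ ξ' ξ, 0 ≤ O ξ' ξ)
    (hO_sum : ∀ ξ, ∑ ξ', O ξ' ξ = 1)
    -- uniform diagonal dominance: min_ξ O(ξ|ξ) > |Ξ| · max_{ξ₁ ≠ ξ₂} O(ξ₂|ξ₁)
    (hdd : ∀ ξ ξ₁ ξ₂, ξ₁ ≠ ξ₂ → (Fintype.card Ξ : ℝ) * O ξ₂ ξ₁ < O ξ ξ) :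
    ∃ c₀ : ℝ, 0 < c₀ ∧ ∀ Q P : Ξ → ℝ,
      (∀ ξ, 0 ≤ Q ξ) → (∑ ξ, Q ξ = 1) → (∀ ξ, 0 ≤ P ξ) → (∑ ξ, P ξ = 1) →
      (1/2) * ∑ ξ, |Q ξ - P ξ| ≤
        c₀ * ((1/2) * ∑ ξ', |(∑ ξ, O ξ' ξ * Q ξ) - (∑ ξ, O ξ' ξ * P ξ)|) :=
  stmt0_general O hO_nonneg hO_sum hdd
end

section
/- Suppose the cost h is bounded by L, the noise conditional distribution O is uniformly diagonally dominant with contraction constant c₀(O), and Q is any distribution with d_TV(O⋆Q, O⋆P) ≤ 2ε (i.e., O⋆Q lies in the TV ball of radius ε in the half-ℓ¹ convention around O⋆P). Then for every x, E^Q[h(x,ξ)] ≤ E^P[h(x,ξ)] + 2L·c₀(O)·ε. -/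
open Finset

/-- bound on the expectation over a distribution whose convolution is
TV-close to that of the true distribution, under uniform diagonal dominance. -/
theorem stmt5 {Ξ : Type*} [Fintype Ξ] [DecidableEq Ξ] [Nonempty Ξ] {X : Type*}
    (O : Ξ → Ξ → ℝ)  -- `O ξ' ξ` denotes O(ξ'|ξ)
    (hO_nonneg : ∀ ξ' ξ, 0 ≤ O ξ' ξ)
    (hO_sum : ∀ ξ, ∑ ξ', O ξ' ξ = 1)
    (dmin dmax : ℝ)
    (hmin : ∀ ξ, dmin ≤ O ξ ξ)
    (hmax : ∀ ξ ξ', ξ ≠ ξ' → O ξ' ξ ≤ dmax)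
    (hdd : (Fintype.card Ξ : ℝ) * dmax < dmin)   -- uniform diagonal dominance
    (c₀ : ℝ) (hc₀ : c₀ = 1 / (dmin - (Fintype.card Ξ : ℝ) * dmax))
    (h : X → Ξ → ℝ) (L : ℝ) (hL : ∀ x ξ, |h x ξ| ≤ L)
    (P Q : Ξ → ℝ)
    (hP_nonneg : ∀ ξ, 0 ≤ P ξ) (hP_sum : ∑ ξ, P ξ = 1)
    (hQ_nonneg : ∀ ξ, 0 ≤ Q ξ) (hQ_sum : ∑ ξ, Q ξ = 1)
    (ε : ℝ)
    -- O⋆Q lies in the TV ball of radius ε around O⋆P (half-ℓ¹ convention)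
    (hball : ∑ ξ', |(∑ ξ, O ξ' ξ * Q ξ) - (∑ ξ, O ξ' ξ * P ξ)| ≤ 2 * ε) :
    ∀ x : X, (∑ ξ, h x ξ * Q ξ) ≤ (∑ ξ, h x ξ * P ξ) + 2 * L * c₀ * ε := by
  intro x
  have hL0 : 0 ≤ L := (abs_nonneg _).trans (hL x (Classical.arbitrary Ξ))
  have hpos : 0 < dmin - (Fintype.card Ξ : ℝ) * dmax := by linarith
  have hc0 : 0 < c₀ := by rw [hc₀]; positivity
  have hε : 0 ≤ ε := by
    have h1 : (0:ℝ) ≤ ∑ ξ', |(∑ ξ, O ξ' ξ * Q ξ) - (∑ ξ, O ξ' ξ * P ξ)| :=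
      Finset.sum_nonneg fun _ _ => abs_nonneg _
    linarith
  have key : ∑ ξ, |Q ξ - P ξ| ≤ 2 * c₀ * ε := by
    by_cases hcard : ∃ a b : Ξ, a ≠ b
    · obtain ⟨a, b, hab⟩ := hcard
      have hdmax0 : 0 ≤ dmax := le_trans (hO_nonneg b a) (hmax a b hab)
      have step : ∀ ξ' : Ξ, dmin * |Q ξ' - P ξ'| - dmax * ∑ ξ, |Q ξ - P ξ| ≤
          |(∑ ξ, O ξ' ξ * Q ξ) - (∑ ξ, O ξ' ξ * P ξ)| := by
        intro ξ'
        have hsplit : (∑ ξ, O ξ' ξ * Q ξ) - (∑ ξ, O ξ' ξ * P ξ)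
            = O ξ' ξ' * (Q ξ' - P ξ') + ∑ ξ ∈ univ.erase ξ', O ξ' ξ * (Q ξ - P ξ) := by
          rw [← Finset.sum_sub_distrib]
          rw [← Finset.add_sum_erase _ (fun ξ => O ξ' ξ * Q ξ - O ξ' ξ * P ξ)
            (Finset.mem_univ ξ')]
          congr 1
          · ring
          · exact Finset.sum_congr rfl fun ξ _ => by ring
        set A := O ξ' ξ' * (Q ξ' - P ξ')
        set B := ∑ ξ ∈ univ.erase ξ', O ξ' ξ * (Q ξ - P ξ)
        have hA : dmin * |Q ξ' - P ξ'| ≤ |A| := by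
          rw [abs_mul, abs_of_nonneg (hO_nonneg ξ' ξ')]
          exact mul_le_mul_of_nonneg_right (hmin ξ') (abs_nonneg _)
        have hB : |B| ≤ dmax * ∑ ξ, |Q ξ - P ξ| := by
          calc |B| ≤ ∑ ξ ∈ univ.erase ξ', |O ξ' ξ * (Q ξ - P ξ)| :=
                Finset.abs_sum_le_sum_abs _ _
            _ ≤ ∑ ξ ∈ univ.erase ξ', dmax * |Q ξ - P ξ| := by
                refine Finset.sum_le_sum fun ξ hξ => ?_
                rw [abs_mul, abs_of_nonneg (hO_nonneg ξ' ξ)]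
                exact mul_le_mul_of_nonneg_right
                  (hmax ξ ξ' ((Finset.mem_erase.mp hξ).1))
                  (abs_nonneg _)
            _ ≤ ∑ ξ, dmax * |Q ξ - P ξ| := by
                refine Finset.sum_le_sum_of_subset_of_nonneg
                  (Finset.erase_subset _ _) fun ξ _ _ => by positivity
            _ = dmax * ∑ ξ, |Q ξ - P ξ| := (Finset.mul_sum _ _ _).symm
        have habs : |A| ≤ |A + B| + |B| := by
          calc |A| = |(A + B) - B| := by ring_nf
            _ ≤ |A + B| + |B| := abs_sub _ _
        rw [hsplit]
        linarith
      have main : (dmin - (Fintype.card Ξ : ℝ) * dmax) * ∑ ξ, |Q ξ - P ξ| ≤ 2 * ε := by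
        have hsum := Finset.sum_le_sum fun ξ' (_ : ξ' ∈ (univ : Finset Ξ)) => step ξ'
        rw [Finset.sum_sub_distrib, ← Finset.mul_sum, Finset.sum_const,
          Finset.card_univ, nsmul_eq_mul] at hsum
        have := le_trans hsum hball
        nlinarith [this]
      have hle : ∑ ξ, |Q ξ - P ξ| ≤ 2 * ε / (dmin - (Fintype.card Ξ : ℝ) * dmax) := by
        rw [le_div_iff₀ hpos]
        nlinarith [main]
      have heq : 2 * c₀ * ε = 2 * ε / (dmin - (Fintype.card Ξ : ℝ) * dmax) := by
        rw [hc₀]; ring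
      linarith [hle, heq.ge]
    · push_neg at hcard
      have ξ₀ := Classical.arbitrary Ξ
      have huniv : (univ : Finset Ξ) = {ξ₀} :=
        Finset.eq_singleton_iff_unique_mem.mpr ⟨Finset.mem_univ _, fun x _ => hcard x ξ₀⟩
      rw [huniv] at hQ_sum hP_sum ⊢
      rw [Finset.sum_singleton] at hQ_sum hP_sum ⊢
      rw [hQ_sum, hP_sum]
      simp only [sub_self, abs_zero]
      positivity
  have hh : ∑ ξ, h x ξ * Q ξ - ∑ ξ, h x ξ * P ξ ≤ L * ∑ ξ, |Q ξ - P ξ| := by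
    rw [← Finset.sum_sub_distrib]
    calc ∑ ξ, (h x ξ * Q ξ - h x ξ * P ξ)
        ≤ ∑ ξ, |h x ξ * Q ξ - h x ξ * P ξ| :=
          Finset.sum_le_sum fun ξ _ => le_abs_self _
      _ = ∑ ξ, |h x ξ| * |Q ξ - P ξ| := by
          refine Finset.sum_congr rfl fun ξ _ => ?_
          rw [← abs_mul]; congr 1; ring
      _ ≤ ∑ ξ, L * |Q ξ - P ξ| :=
          Finset.sum_le_sum fun ξ _ =>
            mul_le_mul_of_nonneg_right (hL x ξ) (abs_nonneg _)
      _ = L * ∑ ξ, |Q ξ - P ξ| := (Finset.mul_sum _ _ _).symm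
  have := mul_le_mul_of_nonneg_left key hL0
  linarith
end

section
/- The worst-case expectation sup over the TV ball admits the LP duality reformulation: for a finite set Ξ, a function ℓ: Ξ → ℝ, a conditional distribution O, an empirical distribution P̂' on Ξ', and ε ≥ 0, sup_{Q ∈ Δ(Ξ) : Σ_{ξ'}|P̂'(ξ') − (O⋆Q)(ξ')| ≤ 2ε} Σ_ξ ℓ(ξ)Q(ξ) = inf_{λ,μ ≥ 0} [ max_ξ (ℓ(ξ) + Σ_{ξ'} (λ(ξ') − μ(ξ'))O(ξ'|ξ)) + 2ε·max_{ξ'} (λ(ξ') + μ(ξ')) + Σ_{ξ'} (μ(ξ') − λ(ξ'))P̂'(ξ') ], provided there exists a strictly feasible Q (e.g., some P ∈ Δ(Ξ) with O⋆P = P' and d_TV(P', P̂') < ε). -/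
/-!
The ℓ¹-ball `∑ |r| ≤ 2ε` is the intersection of the half-spaces `∑ s r ≤ 2ε` over sign
vectors `s`, so the primal problem maximises a linear function over the simplex subject to finitely
many affine constraints. Weak duality is the estimate `⟪μ - λ, r⟫ ≤ max (λ + μ) · ‖r‖₁`. Conversely,
under Slater's condition a separating hyperplane yields multipliers `η s ≥ 0` for the sign
constraints; with `ν = ∑ η s • s` and `N = ∑ η s` one has `|ν| ≤ N`, and `λ = (N + ν) / 2`,
`μ = (N - ν) / 2` is a dual point whose value, evaluated at the vertices of the simplex, is at most
the primal value.
-/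

open Finset Filter Topology

lemma SignType.abs_coe_le_one {α : Type*} [Ring α] [LinearOrder α] [IsStrictOrderedRing α]
    (s : SignType) : |(s : α)| ≤ 1 := by
  cases s <;> simp

lemma sum_sign_mul_le_sum_abs {ι α : Type*} [Fintype ι] [Ring α] [LinearOrder α]
    [IsStrictOrderedRing α] (s : ι → SignType) (x : ι → α) :
    ∑ i, s i * x i ≤ ∑ i, |x i| :=
  sum_le_sum fun i _ => (le_abs_self _).trans <| by
    rw [abs_mul]; exact mul_le_of_le_one_left (abs_nonneg _) (SignType.abs_coe_le_one _)

lemma sum_abs_le_iff_forall_sign {ι α : Type*} [Fintype ι] [Ring α] [LinearOrder α]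
    [IsStrictOrderedRing α] (x : ι → α) (c : α) :
    ∑ i, |x i| ≤ c ↔ ∀ s : ι → SignType, ∑ i, s i * x i ≤ c :=
  ⟨fun h s => (sum_sign_mul_le_sum_abs s x).trans h, fun h => by
    simpa only [sign_mul_self] using h fun i => SignType.sign (x i)⟩

lemma nonpos_of_forall_pos_add_mul_neg {a b : ℝ} (h : ∀ t : ℝ, 0 < t → a + t * b < 0) :
    a ≤ 0 ∧ b ≤ 0 := by
  constructor
  · have hlim : Tendsto (fun t : ℝ => a + t * b) (𝓝[>] 0) (𝓝 a) := by
      have := (show Continuous fun t : ℝ => a + t * b by fun_prop).tendsto 0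
      simpa using this.mono_left nhdsWithin_le_nhds
    exact le_of_tendsto hlim (eventually_nhdsWithin_of_forall fun t ht => (h t ht).le)
  · by_contra! hb
    have := h ((|a| + 1) / b) (by positivity)
    rw [div_mul_cancel₀ _ hb.ne'] at this
    linarith [neg_abs_le a]

lemma ContinuousLinearMap.apply_eq_sum_mul {ι : Type*} [Fintype ι] [DecidableEq ι]
    (φ : (ι → ℝ) →L[ℝ] ℝ) (b : ι → ℝ) : φ b = ∑ i, b i * φ (Pi.single i 1) := by
  conv_lhs => rw [← univ_sum_single b]
  simp only [map_sum]
  refine sum_congr rfl fun i _ => ?_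
  rw [← smul_eq_mul, ← map_smul, ← Pi.single_smul', smul_eq_mul, mul_one]

lemma isOpen_setOf_exists_mem_forall_lt {E ι : Type*} [Finite ι] (X : Set E) (h : ι → E → ℝ) :
    IsOpen {b : ι → ℝ | ∃ x ∈ X, ∀ i, h i x < b i} := by
  have : {b : ι → ℝ | ∃ x ∈ X, ∀ i, h i x < b i} = ⋃ x ∈ X, ⋂ i, {b | h i x < b i} := by
    ext; simp
  rw [this]
  exact isOpen_biUnion fun x _ =>
    isOpen_iInter_of_finite fun i => isOpen_lt continuous_const (continuous_apply i)

lemma convex_setOf_exists_mem_forall_lt {E ι : Type*} [AddCommGroup E] [Module ℝ E] {X : Set E}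
    (hX : Convex ℝ X) {h : ι → E → ℝ} (hh : ∀ i, ConvexOn ℝ X (h i)) :
    Convex ℝ {b : ι → ℝ | ∃ x ∈ X, ∀ i, h i x < b i} := by
  rintro b₁ ⟨x₁, hx₁, hb₁⟩ b₂ ⟨x₂, hx₂, hb₂⟩ a₁ a₂ ha₁ ha₂ ha
  refine ⟨a₁ • x₁ + a₂ • x₂, hX hx₁ hx₂ ha₁ ha₂ ha, fun i => ?_⟩
  have hconv := (hh i).2 hx₁ hx₂ ha₁ ha₂ ha
  simp only [smul_eq_mul, Pi.add_apply, Pi.smul_apply] at hconv ⊢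
  rcases ha₁.eq_or_lt with rfl | ha₁'
  · rw [zero_add] at ha
    subst ha
    simpa using hb₂ i
  · linarith [mul_lt_mul_of_pos_left (hb₁ i) ha₁', mul_le_mul_of_nonneg_left (hb₂ i).le ha₂]

/-- The Fan–Glicksberg–Hoffman theorem of the alternative. -/
theorem exists_nonneg_sum_mul_nonneg_of_not_exists_neg {E ι : Type*} [AddCommGroup E]
    [Module ℝ E] [Fintype ι] {X : Set E} (hX : Convex ℝ X) (hXne : X.Nonempty)
    {h : ι → E → ℝ} (hh : ∀ i, ConvexOn ℝ X (h i)) (hno : ¬ ∃ x ∈ X, ∀ i, h i x < 0) :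
    ∃ c : ι → ℝ, 0 ≤ c ∧ c ≠ 0 ∧ ∀ x ∈ X, 0 ≤ ∑ i, c i * h i x := by
  classical
  obtain ⟨φ, hφ⟩ := geometric_hahn_banach_open_point (x := 0)
    (convex_setOf_exists_mem_forall_lt hX hh) (isOpen_setOf_exists_mem_forall_lt X h) hno
  rw [ContinuousLinearMap.map_zero] at hφ
  obtain ⟨x₀, hx₀⟩ := hXne
  -- The open set is upward closed and has `(h i x)ᵢ`, `x ∈ X`, in its closure.
  refine ⟨fun i => -φ (Pi.single i 1), fun j => ?_, fun hc => ?_, fun x hx => ?_⟩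
  · have hshift := nonpos_of_forall_pos_add_mul_neg (a := φ fun i => h i x₀ + 1)
      (b := φ (Pi.single j 1)) fun t ht => by
      rw [← smul_eq_mul, ← map_smul, ← map_add]
      refine hφ _ ⟨x₀, hx₀, fun i => ?_⟩
      have : 0 ≤ t * Pi.single (M := fun _ => ℝ) j 1 i := by
        rw [Pi.single_apply]; split_ifs <;> simp [ht.le]
      simp only [Pi.add_apply, Pi.smul_apply, smul_eq_mul]
      linarith
    simpa using hshift.2
  · have hφ0 : φ = 0 := by
      ext b
      rw [φ.apply_eq_sum_mul]
      simp [neg_eq_zero.mp (congrFun hc _)]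
    simpa [hφ0] using hφ _ ⟨x₀, hx₀, fun i => lt_add_one (h i x₀)⟩
  · have hshift := nonpos_of_forall_pos_add_mul_neg (a := φ fun i => h i x)
      (b := φ 1) fun t ht => by
      rw [← smul_eq_mul, ← map_smul, ← map_add]
      exact hφ _ ⟨x, hx, fun i => by simp [ht]⟩
    have := hshift.1
    rw [φ.apply_eq_sum_mul] at this
    simpa [mul_comm] using this

theorem exists_lagrange_multipliers_of_slater {E ι : Type*} [AddCommGroup E] [Module ℝ E]
    [Fintype ι] {X : Set E} {f : E → ℝ} {g : ι → E → ℝ} {p : ℝ} (hf : ConcaveOn ℝ X f)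
    (hg : ∀ i, ConvexOn ℝ X (g i)) (hp : ∀ x ∈ X, (∀ i, g i x ≤ 0) → f x ≤ p)
    (hslater : ∃ x ∈ X, ∀ i, g i x < 0) :
    ∃ η : ι → ℝ, 0 ≤ η ∧ ∀ x ∈ X, f x - ∑ i, η i * g i x ≤ p := by
  obtain ⟨x₀, hx₀, hgx₀⟩ := hslater
  -- The objective enters the alternative as one more constraint, `p - f x < 0`.
  let h : Option ι → E → ℝ := fun o => o.elim (fun x => p - f x) g
  have hh : ∀ o, ConvexOn ℝ X (h o) := by
    rintro (_ | i)
    exacts [(convexOn_const p hf.1).sub hf, hg i]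
  have hno : ¬ ∃ x ∈ X, ∀ o, h o x < 0 := fun ⟨x, hx, hlt⟩ => by
    have := hp x hx fun i => (hlt (some i)).le
    linarith [show p - f x < 0 from hlt none]
  obtain ⟨c, hc0, hcne, hc⟩ :=
    exists_nonneg_sum_mul_nonneg_of_not_exists_neg hf.1 ⟨x₀, hx₀⟩ hh hno
  simp only [Fintype.sum_option, h, Option.elim] at hc
  have hcpos : 0 < c none := by
    refine (hc0 none).lt_of_ne fun hnone => hcne ?_
    have hterms_nonpos : ∀ i ∈ univ, c (some i) * g i x₀ ≤ 0 := fun i _ =>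
      mul_nonpos_of_nonneg_of_nonpos (hc0 _) (hgx₀ i).le
    have hsum : ∑ i, c (some i) * g i x₀ = 0 :=
      le_antisymm (sum_nonpos hterms_nonpos) (by simpa [← hnone] using hc x₀ hx₀)
    funext o
    cases o with
    | none => exact hnone.symm
    | some i =>
      simpa [(hgx₀ i).ne] using (sum_eq_zero_iff_of_nonpos hterms_nonpos).1 hsum i (mem_univ i)
  refine ⟨fun i => c (some i) / c none, fun i => div_nonneg (hc0 _) hcpos.le, fun x hx => ?_⟩
  have hdiv : ∑ i, c (some i) / c none * g i x = (∑ i, c (some i) * g i x) / c none := by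
    rw [sum_div]; exact sum_congr rfl fun i _ => div_mul_eq_mul_div _ _ _
  rw [hdiv, sub_le_iff_le_add, ← sub_le_iff_le_add', le_div_iff₀ hcpos]
  linarith [hc x hx]

lemma sum_mul_le_iSup_of_mem_stdSimplex {ι : Type*} [Fintype ι] (h : ι → ℝ) {Q : ι → ℝ}
    (hQ : Q ∈ stdSimplex ℝ ι) : ∑ i, h i * Q i ≤ ⨆ i, h i :=
  calc ∑ i, h i * Q i ≤ ∑ i, (⨆ j, h j) * Q i :=
        sum_le_sum fun i _ =>
          mul_le_mul_of_nonneg_right (le_ciSup (Finite.bddAbove_range h) i) (hQ.1 i)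
    _ = ⨆ i, h i := by rw [← mul_sum, hQ.2, mul_one]

theorem csSup_eq_csInf_of_forall_le {α : Type*} [ConditionallyCompleteLattice α] {S T : Set α}
    (hS : S.Nonempty) (hT : T.Nonempty) (hST : ∀ v ∈ S, ∀ w ∈ T, v ≤ w)
    (hdual : ∀ p ∈ upperBounds S, ∃ w ∈ T, w ≤ p) : sSup S = sInf T := by
  obtain ⟨w, hw, hwS⟩ := hdual (sSup S) fun v hv =>
    le_csSup (hT.mono fun w hw v hv => hST v hv w hw) hv
  exact le_antisymm (csSup_le hS fun v hv => le_csInf hT (hST v hv))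
    ((csInf_le ⟨_, fun w' hw' => hST _ hS.some_mem w' hw'⟩ hw).trans hwS)

section TVBall

open Matrix

variable {Ξ Ξ' : Type*} [Fintype Ξ] [Fintype Ξ']

noncomputable def tvDualObjective (O : Ξ' → Ξ → ℝ) (ℓ : Ξ → ℝ) (Phat : Ξ' → ℝ) (ε : ℝ)
    (lam mu : Ξ' → ℝ) : ℝ :=
  (⨆ ξ : Ξ, (ℓ ξ + ∑ ξ', (lam ξ' - mu ξ') * O ξ' ξ)) + 2 * ε * (⨆ ξ' : Ξ', (lam ξ' + mu ξ'))
    + ∑ ξ', (mu ξ' - lam ξ') * Phat ξ'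

theorem sum_mul_le_tvDualObjective {O : Ξ' → Ξ → ℝ} {ℓ : Ξ → ℝ} {Phat : Ξ' → ℝ} {ε : ℝ}
    {Q : Ξ → ℝ} (hQ : Q ∈ stdSimplex ℝ Ξ) (hQε : ∑ ξ', |Phat ξ' - ∑ ξ, O ξ' ξ * Q ξ| ≤ 2 * ε)
    {lam mu : Ξ' → ℝ} (hlam : ∀ ξ', 0 ≤ lam ξ') (hmu : ∀ ξ', 0 ≤ mu ξ') :
    ∑ ξ, ℓ ξ * Q ξ ≤ tvDualObjective O ℓ Phat ε lam mu := by
  set M := ⨆ ξ', (lam ξ' + mu ξ')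
  have hM : ∀ ξ', |mu ξ' - lam ξ'| ≤ M := fun ξ' => by
    have := le_ciSup (Finite.bddAbove_range fun ξ' => lam ξ' + mu ξ') ξ'
    rw [abs_le]; constructor <;> linarith [hlam ξ', hmu ξ']
  have hM0 : 0 ≤ M := Real.iSup_nonneg fun ξ' => add_nonneg (hlam ξ') (hmu ξ')
  have hsplit : ∑ ξ, ℓ ξ * Q ξ = ∑ ξ, (ℓ ξ + ∑ ξ', (lam ξ' - mu ξ') * O ξ' ξ) * Q ξ
      + ∑ ξ', (mu ξ' - lam ξ') * ∑ ξ, O ξ' ξ * Q ξ := by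
    have := dotProduct_mulVec (fun ξ' => mu ξ' - lam ξ') O Q
    simp only [dotProduct, mulVec, vecMul] at this
    rw [this, ← sum_add_distrib]
    refine sum_congr rfl fun ξ _ => ?_
    simp only [sub_eq_add_neg, add_mul, sum_add_distrib, neg_mul, sum_neg_distrib]
    ring
  have htransport : ∑ ξ', (mu ξ' - lam ξ') * ∑ ξ, O ξ' ξ * Q ξ
      ≤ ∑ ξ', (mu ξ' - lam ξ') * Phat ξ' + 2 * ε * M :=
    calc ∑ ξ', (mu ξ' - lam ξ') * ∑ ξ, O ξ' ξ * Q ξ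
        = ∑ ξ', (mu ξ' - lam ξ') * Phat ξ'
          + ∑ ξ', (mu ξ' - lam ξ') * (∑ ξ, O ξ' ξ * Q ξ - Phat ξ') := by
          rw [← sum_add_distrib]; exact sum_congr rfl fun _ _ => by ring
      _ ≤ ∑ ξ', (mu ξ' - lam ξ') * Phat ξ' + ∑ ξ', M * |Phat ξ' - ∑ ξ, O ξ' ξ * Q ξ| := by
          refine add_le_add_right (sum_le_sum fun ξ' _ => ?_) _
          rw [abs_sub_comm]
          exact (le_abs_self _).trans
            (by rw [abs_mul]; exact mul_le_mul_of_nonneg_right (hM ξ') (abs_nonneg _))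
      _ ≤ ∑ ξ', (mu ξ' - lam ξ') * Phat ξ' + 2 * ε * M := by
          rw [← mul_sum, mul_comm (2 * ε)]
          exact add_le_add_right (mul_le_mul_of_nonneg_left hQε hM0) _
  have := sum_mul_le_iSup_of_mem_stdSimplex (fun ξ => ℓ ξ + ∑ ξ', (lam ξ' - mu ξ') * O ξ' ξ) hQ
  unfold tvDualObjective
  linarith

theorem exists_tvDualObjective_le [Nonempty Ξ] [Nonempty Ξ'] (O : Ξ' → Ξ → ℝ) (ℓ : Ξ → ℝ)
    (Phat : Ξ' → ℝ) (ε : ℝ) {p : ℝ}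
    (hp : ∀ Q ∈ stdSimplex ℝ Ξ, ∑ ξ', |Phat ξ' - ∑ ξ, O ξ' ξ * Q ξ| ≤ 2 * ε → ∑ ξ, ℓ ξ * Q ξ ≤ p)
    (hslater : ∃ Q ∈ stdSimplex ℝ Ξ, ∑ ξ', |Phat ξ' - ∑ ξ, O ξ' ξ * Q ξ| < 2 * ε) :
    ∃ lam mu : Ξ' → ℝ, (∀ ξ', 0 ≤ lam ξ') ∧ (∀ ξ', 0 ≤ mu ξ') ∧
      tvDualObjective O ℓ Phat ε lam mu ≤ p := by
  classical
  set g : (Ξ' → SignType) → (Ξ → ℝ) → ℝ :=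
    fun s Q => (fun ξ' => (s ξ' : ℝ)) ⬝ᵥ (Phat - of O *ᵥ Q) - 2 * ε
  have hf : ConcaveOn ℝ (stdSimplex ℝ Ξ) (ℓ ⬝ᵥ ·) :=
    ⟨convex_stdSimplex ℝ Ξ, fun Q₁ _ Q₂ _ a b _ _ _ => by
      simp only [dotProduct_add, dotProduct_smul, le_refl]⟩
  have hg : ∀ s, ConvexOn ℝ (stdSimplex ℝ Ξ) (g s) := fun s =>
    ⟨convex_stdSimplex ℝ Ξ, fun Q₁ _ Q₂ _ a b _ _ hab => le_of_eq <| by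
      simp only [g, mulVec_add, mulVec_smul, dotProduct_sub, dotProduct_add, dotProduct_smul,
        smul_eq_mul]
      linear_combination (2 * ε - (fun ξ' => (s ξ' : ℝ)) ⬝ᵥ Phat) * hab⟩
  obtain ⟨η, hη0, hη⟩ := exists_lagrange_multipliers_of_slater hf hg
    (fun Q hQ hgQ => hp Q hQ <| (sum_abs_le_iff_forall_sign _ _).2 fun s => sub_nonpos.1 (hgQ s))
    (let ⟨Q₀, hQ₀, hQ₀ε⟩ := hslater
     ⟨Q₀, hQ₀, fun s => sub_neg.2 <| (sum_sign_mul_le_sum_abs s _).trans_lt hQ₀ε⟩)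
  set N := ∑ s, η s
  set ν : Ξ' → ℝ := fun ξ' => ∑ s, η s * s ξ'
  have hν : ∀ ξ', |ν ξ'| ≤ N := fun ξ' => (abs_sum_le_sum_abs _ _).trans <|
    sum_le_sum fun s _ => by
      rw [abs_mul, abs_of_nonneg (hη0 s)]
      exact mul_le_of_le_one_right (hη0 s) (SignType.abs_coe_le_one _)
  have hlag : ∀ ξ, ℓ ξ + ∑ ξ', ν ξ' * O ξ' ξ ≤ p - 2 * ε * N + ∑ ξ', ν ξ' * Phat ξ' := by
    intro ξ
    have := hη (Pi.single ξ 1) (single_mem_stdSimplex ℝ ξ)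
    have hlagrangian : ∑ s, η s * g s (Pi.single ξ 1)
        = ∑ ξ', ν ξ' * (Phat ξ' - O ξ' ξ) - 2 * ε * N := by
      simp only [g, ν, N, mulVec_single_one, dotProduct, mul_sub, sum_sub_distrib, mul_sum, sum_mul,
        col_apply, of_apply, Pi.sub_apply, mul_assoc, mul_comm (2 * ε)]
      rw [sum_comm, sum_comm (f := fun s ξ' => η s * ((s ξ' : ℝ) * O ξ' ξ))]
    rw [dotProduct_single_one, hlagrangian] at this
    simp only [mul_sub, sum_sub_distrib] at this
    linarith
  refine ⟨fun ξ' => (N + ν ξ') / 2, fun ξ' => (N - ν ξ') / 2,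
    fun ξ' => by linarith [(abs_le.1 (hν ξ')).1], fun ξ' => by linarith [(abs_le.1 (hν ξ')).2], ?_⟩
  have hdiff : ∀ ξ', (N + ν ξ') / 2 - (N - ν ξ') / 2 = ν ξ' := fun _ => by ring
  have hsum : ∀ ξ', (N + ν ξ') / 2 + (N - ν ξ') / 2 = N := fun _ => by ring
  have hdiff' : ∀ ξ', (N - ν ξ') / 2 - (N + ν ξ') / 2 = -ν ξ' := fun _ => by ring
  simp only [tvDualObjective, hdiff, hsum, hdiff', ciSup_const, neg_mul, sum_neg_distrib]
  linarith [ciSup_le hlag]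

end TVBall

theorem stmt7_general {Ξ Ξ' : Type*} [Fintype Ξ] [Fintype Ξ'] [Nonempty Ξ] [Nonempty Ξ']
    (O : Ξ' → Ξ → ℝ)  -- `O ξ' ξ` denotes O(ξ'|ξ)
    (ℓ : Ξ → ℝ) (Phat : Ξ' → ℝ)
    (ε : ℝ)
    -- Slater condition: a strictly feasible distribution exists
    (hslater : ∃ Q : Ξ → ℝ, (∀ ξ, 0 ≤ Q ξ) ∧ (∑ ξ, Q ξ = 1) ∧
      ∑ ξ', |Phat ξ' - ∑ ξ, O ξ' ξ * Q ξ| < 2 * ε) :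
    sSup {v : ℝ | ∃ Q : Ξ → ℝ, (∀ ξ, 0 ≤ Q ξ) ∧ (∑ ξ, Q ξ = 1) ∧
        (∑ ξ', |Phat ξ' - ∑ ξ, O ξ' ξ * Q ξ|) ≤ 2 * ε ∧
        v = ∑ ξ, ℓ ξ * Q ξ}
      = sInf {w : ℝ | ∃ lam mu : Ξ' → ℝ, (∀ ξ', 0 ≤ lam ξ') ∧ (∀ ξ', 0 ≤ mu ξ') ∧
        w = (⨆ ξ : Ξ, (ℓ ξ + ∑ ξ', (lam ξ' - mu ξ') * O ξ' ξ))
            + 2 * ε * (⨆ ξ' : Ξ', (lam ξ' + mu ξ'))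
            + ∑ ξ', (mu ξ' - lam ξ') * Phat ξ'} := by
  obtain ⟨Q₀, hQ₀n, hQ₀s, hQ₀ε⟩ := hslater
  refine csSup_eq_csInf_of_forall_le ⟨_, Q₀, hQ₀n, hQ₀s, hQ₀ε.le, rfl⟩
    ⟨_, 0, 0, fun _ => le_rfl, fun _ => le_rfl, rfl⟩ ?_ fun p hp => ?_
  · rintro v ⟨Q, hQn, hQs, hQε, rfl⟩ w ⟨lam, mu, hlam, hmu, rfl⟩
    exact sum_mul_le_tvDualObjective ⟨hQn, hQs⟩ hQε hlam hmu
  · obtain ⟨lam, mu, hlam, hmu, hle⟩ := exists_tvDualObjective_le O ℓ Phat ε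
      (fun Q hQ hQε => hp ⟨Q, hQ.1, hQ.2, hQε, rfl⟩) ⟨Q₀, ⟨hQ₀n, hQ₀s⟩, hQ₀ε⟩
    exact ⟨_, ⟨lam, mu, hlam, hmu, rfl⟩, hle⟩

/-- LP strong duality for the worst-case expectation over the TV ball. -/
theorem stmt7 {Ξ Ξ' : Type*} [Fintype Ξ] [Fintype Ξ'] [Nonempty Ξ] [Nonempty Ξ']
    (O : Ξ' → Ξ → ℝ)  -- `O ξ' ξ` denotes O(ξ'|ξ)
    (hO_nonneg : ∀ ξ' ξ, 0 ≤ O ξ' ξ)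
    (hO_sum : ∀ ξ, ∑ ξ', O ξ' ξ = 1)
    (ℓ : Ξ → ℝ) (Phat : Ξ' → ℝ)
    (hPhat_nonneg : ∀ ξ', 0 ≤ Phat ξ') (hPhat_sum : ∑ ξ', Phat ξ' = 1)
    (ε : ℝ) (hε : 0 ≤ ε)
    -- Slater condition: a strictly feasible distribution exists
    (hslater : ∃ Q : Ξ → ℝ, (∀ ξ, 0 ≤ Q ξ) ∧ (∑ ξ, Q ξ = 1) ∧
      ∑ ξ', |Phat ξ' - ∑ ξ, O ξ' ξ * Q ξ| < 2 * ε) :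
    sSup {v : ℝ | ∃ Q : Ξ → ℝ, (∀ ξ, 0 ≤ Q ξ) ∧ (∑ ξ, Q ξ = 1) ∧
        (∑ ξ', |Phat ξ' - ∑ ξ, O ξ' ξ * Q ξ|) ≤ 2 * ε ∧
        v = ∑ ξ, ℓ ξ * Q ξ}
      = sInf {w : ℝ | ∃ lam mu : Ξ' → ℝ, (∀ ξ', 0 ≤ lam ξ') ∧ (∀ ξ', 0 ≤ mu ξ') ∧
        w = (⨆ ξ : Ξ, (ℓ ξ + ∑ ξ', (lam ξ' - mu ξ') * O ξ' ξ))
            + 2 * ε * (⨆ ξ' : Ξ', (lam ξ' + mu ξ'))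
            + ∑ ξ', (mu ξ' - lam ξ') * Phat ξ'} :=
  stmt7_general O ℓ Phat ε hslater
end

section
/- Asymptotic consistency of the optimal values: let α_N ∈ (0,1) with Σ_N α_N < ∞ and ε_N := ε_TV(α_N) → 0, let O be uniformly diagonally dominant, |h(x,ξ)| ≤ L for all (x,ξ) ∈ X×Ξ, and let Ĵ_N = inf_{x∈X} sup_{Q: d_TV(O⋆Q, P̂'_N) ≤ ε_N} E^Q[h(x,ξ)] where P̂'_N is the empirical distribution of N i.i.d. noisy samples. Then Ĵ_N → J* := inf_{x∈X} E^P[h(x,ξ)] almost surely. -/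
/-!
Diagonal dominance makes the noise channel `Q ↦ O⋆Q` quantitatively injective in `ℓ¹`:
`c ‖w‖₁ ≤ ‖O w‖₁` with `c = 2 min_ξ O(ξ|ξ) - 1 > 0`. So whenever the true noisy law `O⋆P` lies
in the `ε`-ball around the empirical noisy distribution, `P` is feasible and every feasible `Q`
has `‖Q - P‖₁ ≤ 4ε/c`, which squeezes the robust value: `J* ≤ Ĵ_N ≤ J* + 4Lε/c`.
Hoeffding's inequality for each of the `2^|Ξ|` events `{ξ ∈ A}` and a union bound show that
`O⋆P` leaves the ball of radius `ε_TV(α_N)` with probability at most `α_N`; by Borel–Cantelli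
this happens only finitely often almost surely, and `ε_N → 0`.
-/

open Finset MeasureTheory ProbabilityTheory Real Filter Matrix

noncomputable def tvDist {β : Type*} [Fintype β] (p q : β → ℝ) : ℝ := (1 / 2) * ∑ b, |p b - q b|

section TotalVariation

variable {β : Type*} [Fintype β]

theorem tvDist_comm (p q : β → ℝ) : tvDist p q = tvDist q p := by
  simp only [tvDist, abs_sub_comm]

theorem tvDist_triangle (p q r : β → ℝ) : tvDist p r ≤ tvDist p q + tvDist q r := by
  simp only [tvDist, ← mul_add, ← sum_add_distrib]
  gcongr with b
  exact abs_sub_le _ _ _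

theorem tvDist_eq_sum_filter_sub {p q : β → ℝ} (h : ∑ b, p b = ∑ b, q b) :
    tvDist p q = ∑ b ∈ univ.filter (fun b => q b < p b), (p b - q b) := by
  have habs : ∀ b, |p b - q b| = 2 * (if q b < p b then p b - q b else 0) - (p b - q b) := by
    intro b
    split_ifs with hb
    · rw [abs_of_pos (sub_pos.2 hb)]; ring
    · rw [abs_of_nonpos (sub_nonpos.2 (not_lt.1 hb))]; ring
  simp only [tvDist, habs, sum_sub_distrib, ← mul_sum, ← sum_filter, h, sub_self]
  ring

end TotalVariation

section DiagonalDominance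

variable {β : Type*} [Fintype β] [DecidableEq β] {O : Matrix β β ℝ}

theorem two_mul_diag_sub_sum_le_abs_mulVec (hO : ∀ b' b, 0 ≤ O b' b) (w : β → ℝ) (b' : β) :
    2 * O b' b' * |w b'| - ∑ b, O b' b * |w b| ≤ |(O *ᵥ w) b'| := by
  have hw := add_sum_erase univ (fun b => O b' b * w b) (mem_univ b')
  have habs := add_sum_erase univ (fun b => O b' b * |w b|) (mem_univ b')
  have hrest : |∑ b ∈ univ.erase b', O b' b * w b| ≤ ∑ b ∈ univ.erase b', O b' b * |w b| :=
    (abs_sum_le_sum_abs _ _).trans_eq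
      (sum_congr rfl fun b _ => by rw [abs_mul, abs_of_nonneg (hO _ _)])
  have hdiag : |O b' b' * w b'| = O b' b' * |w b'| := by rw [abs_mul, abs_of_nonneg (hO _ _)]
  have := abs_sub_abs_le_abs_add (O b' b' * w b') (∑ b ∈ univ.erase b', O b' b * w b)
  rw [hw] at this
  simp only [Matrix.mulVec, dotProduct]
  linarith

theorem sum_two_mul_diag_sub_one_mul_abs_le (hO : ∀ b' b, 0 ≤ O b' b)
    (hO_sum : ∀ b, ∑ b', O b' b = 1) (w : β → ℝ) :
    ∑ b, (2 * O b b - 1) * |w b| ≤ ∑ b, |(O *ᵥ w) b| := by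
  have hcol : ∑ b', ∑ b, O b' b * |w b| = ∑ b, |w b| := by
    rw [sum_comm]; simp_rw [← sum_mul, hO_sum, one_mul]
  calc ∑ b, (2 * O b b - 1) * |w b| = ∑ b', (2 * O b' b' * |w b'| - ∑ b, O b' b * |w b|) := by
        simp only [sum_sub_distrib, hcol, sub_mul, one_mul]
    _ ≤ ∑ b, |(O *ᵥ w) b| := sum_le_sum fun b' _ => two_mul_diag_sub_sum_le_abs_mulVec hO w b'

theorem half_lt_diag_of_card_mul_le (hO_sum : ∀ b, ∑ b', O b' b = 1)
    (hdd : ∀ b b', b ≠ b' → (Fintype.card β : ℝ) * O b' b ≤ O b b) (b : β) : 1 / 2 < O b b := by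
  have hoff : ∑ b' ∈ univ.erase b, O b' b = 1 - O b b := by
    rw [← hO_sum b, ← add_sum_erase univ _ (mem_univ b)]; ring
  have : Nonempty β := ⟨b⟩
  have hcard : (1 : ℝ) ≤ Fintype.card β := by exact_mod_cast Fintype.card_pos
  have hbound : (Fintype.card β : ℝ) * (1 - O b b) ≤ (Fintype.card β - 1) * O b b := by
    calc (Fintype.card β : ℝ) * (1 - O b b)
        = ∑ b' ∈ univ.erase b, (Fintype.card β : ℝ) * O b' b := by rw [← hoff, mul_sum]
      _ ≤ ∑ _b' ∈ univ.erase b, O b b :=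
          sum_le_sum fun b' hb' => hdd b b' (ne_of_mem_erase hb').symm
      _ = (Fintype.card β - 1) * O b b := by
          rw [sum_const, card_erase_of_mem (mem_univ b), nsmul_eq_mul, card_univ,
            Nat.cast_sub Fintype.card_pos, Nat.cast_one]
  nlinarith

theorem exists_pos_mul_sum_abs_le_sum_abs_mulVec (hO : ∀ b' b, 0 ≤ O b' b)
    (hO_sum : ∀ b, ∑ b', O b' b = 1)
    (hdd : ∀ b b', b ≠ b' → (Fintype.card β : ℝ) * O b' b ≤ O b b) :
    ∃ c > 0, ∀ w : β → ℝ, c * ∑ b, |w b| ≤ ∑ b, |(O *ᵥ w) b| := by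
  cases isEmpty_or_nonempty β
  · exact ⟨1, one_pos, fun w => by simp⟩
  obtain ⟨b₀, hb₀⟩ := Finite.exists_min fun b => O b b
  refine ⟨2 * O b₀ b₀ - 1, by linarith [half_lt_diag_of_card_mul_le hO_sum hdd b₀], fun w => ?_⟩
  refine le_trans ?_ (sum_two_mul_diag_sub_one_mul_abs_le hO hO_sum w)
  rw [mul_sum]
  gcongr with b
  exact hb₀ b

end DiagonalDominance

theorem sum_abs_sub_le_of_tvDist_le {γ β : Type*} [Fintype γ] [Fintype β] {O : Matrix γ β ℝ}
    {c ε : ℝ} (hc : 0 < c) (hcontr : ∀ w : β → ℝ, c * ∑ b, |w b| ≤ ∑ b, |(O *ᵥ w) b|)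
    {P Q : β → ℝ} {p : γ → ℝ} (hQ : tvDist (O *ᵥ Q) p ≤ ε) (hP : tvDist (O *ᵥ P) p ≤ ε) :
    ∑ b, |Q b - P b| ≤ 4 * ε / c := by
  have hdist : ∑ b, |(O *ᵥ (Q - P)) b| = 2 * tvDist (O *ᵥ Q) (O *ᵥ P) := by
    simp only [mulVec_sub, tvDist, Pi.sub_apply]; ring
  have htri := tvDist_triangle (O *ᵥ Q) p (O *ᵥ P)
  rw [tvDist_comm p] at htri
  have hQP := hcontr (Q - P)
  simp only [Pi.sub_apply] at hQP
  rw [le_div_iff₀ hc, mul_comm]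
  linarith

theorem abs_sum_mul_sub_sum_mul_le {β : Type*} [Fintype β] {f P Q : β → ℝ} {L : ℝ}
    (hf : ∀ b, |f b| ≤ L) : |∑ b, f b * Q b - ∑ b, f b * P b| ≤ L * ∑ b, |Q b - P b| := by
  rw [← sum_sub_distrib, mul_sum]
  refine (abs_sum_le_sum_abs _ _).trans (sum_le_sum fun b _ => ?_)
  rw [← mul_sub, abs_mul]
  exact mul_le_mul_of_nonneg_right (hf b) (abs_nonneg _)

noncomputable def worstCaseExpectation {γ β : Type*} [Fintype γ] [Fintype β] (O : Matrix γ β ℝ)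
    (p : γ → ℝ) (ε : ℝ) (f : β → ℝ) : ℝ :=
  sSup {u | ∃ Q : β → ℝ, (∀ b, 0 ≤ Q b) ∧ ∑ b, Q b = 1 ∧ tvDist (O *ᵥ Q) p ≤ ε ∧
    u = ∑ b, f b * Q b}

theorem expectation_le_worstCaseExpectation_le {γ β : Type*} [Fintype γ] [Fintype β]
    {O : Matrix γ β ℝ} {c ε L : ℝ} (hc : 0 < c)
    (hcontr : ∀ w : β → ℝ, c * ∑ b, |w b| ≤ ∑ b, |(O *ᵥ w) b|) {P : β → ℝ} {p : γ → ℝ}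
    (hP_nonneg : ∀ b, 0 ≤ P b) (hP_sum : ∑ b, P b = 1) (hP : tvDist (O *ᵥ P) p ≤ ε)
    {f : β → ℝ} (hf : ∀ b, |f b| ≤ L) :
    ∑ b, f b * P b ≤ worstCaseExpectation O p ε f ∧
      worstCaseExpectation O p ε f ≤ ∑ b, f b * P b + 4 * L / c * ε := by
  have hL : 0 ≤ L := by
    obtain ⟨b⟩ : Nonempty β := by
      by_contra hβ
      simp [not_nonempty_iff.1 hβ] at hP_sum
    exact (abs_nonneg _).trans (hf b)
  have hub : ∀ u ∈ {u | ∃ Q : β → ℝ, (∀ b, 0 ≤ Q b) ∧ ∑ b, Q b = 1 ∧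
      tvDist (O *ᵥ Q) p ≤ ε ∧ u = ∑ b, f b * Q b}, u ≤ ∑ b, f b * P b + 4 * L / c * ε := by
    rintro _ ⟨Q, -, -, hQ, rfl⟩
    calc ∑ b, f b * Q b ≤ ∑ b, f b * P b + L * ∑ b, |Q b - P b| := by
          linarith [le_abs_self (∑ b, f b * Q b - ∑ b, f b * P b),
            abs_sum_mul_sub_sum_mul_le (P := P) (Q := Q) hf]
      _ ≤ ∑ b, f b * P b + L * (4 * ε / c) := by
          gcongr; exact sum_abs_sub_le_of_tvDist_le hc hcontr hQ hP
      _ = ∑ b, f b * P b + 4 * L / c * ε := by ring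
  exact ⟨le_csSup ⟨_, hub⟩ ⟨P, hP_nonneg, hP_sum, hP, rfl⟩,
    csSup_le ⟨_, P, hP_nonneg, hP_sum, hP, rfl⟩ hub⟩

theorem csInf_le_csInf_and_csInf_le_add {ι : Type*} {X : Set ι} (hX : X.Nonempty) {g G : ι → ℝ}
    {m δ : ℝ} (hm : ∀ x ∈ X, m ≤ g x) (hgG : ∀ x ∈ X, g x ≤ G x ∧ G x ≤ g x + δ) :
    sInf {v | ∃ x ∈ X, v = g x} ≤ sInf {v | ∃ x ∈ X, v = G x} ∧
      sInf {v | ∃ x ∈ X, v = G x} ≤ sInf {v | ∃ x ∈ X, v = g x} + δ := by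
  obtain ⟨x₀, hx₀⟩ := hX
  have hg_bdd : BddBelow {v | ∃ x ∈ X, v = g x} := ⟨m, by rintro _ ⟨x, hx, rfl⟩; exact hm x hx⟩
  have hG_bdd : BddBelow {v | ∃ x ∈ X, v = G x} :=
    ⟨m, by rintro _ ⟨x, hx, rfl⟩; exact (hm x hx).trans (hgG x hx).1⟩
  constructor
  · refine le_csInf ⟨_, x₀, hx₀, rfl⟩ ?_
    rintro _ ⟨x, hx, rfl⟩
    exact (csInf_le hg_bdd ⟨x, hx, rfl⟩).trans (hgG x hx).1
  · rw [← sub_le_iff_le_add]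
    refine le_csInf ⟨_, x₀, hx₀, rfl⟩ ?_
    rintro _ ⟨x, hx, rfl⟩
    linarith [csInf_le hG_bdd ⟨x, hx, rfl⟩, (hgG x hx).2]

theorem optimalValue_sandwich {ι γ β : Type*} [Fintype γ] [Fintype β] {X : Set ι}
    (hX : X.Nonempty) {h : ι → β → ℝ} {L : ℝ} (hL : ∀ x ∈ X, ∀ b, |h x b| ≤ L)
    {O : Matrix γ β ℝ} {c ε : ℝ} (hc : 0 < c)
    (hcontr : ∀ w : β → ℝ, c * ∑ b, |w b| ≤ ∑ b, |(O *ᵥ w) b|) {P : β → ℝ} {p : γ → ℝ}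
    (hP_nonneg : ∀ b, 0 ≤ P b) (hP_sum : ∑ b, P b = 1) (hP : tvDist (O *ᵥ P) p ≤ ε) :
    sInf {v | ∃ x ∈ X, v = ∑ b, h x b * P b} ≤
        sInf {v | ∃ x ∈ X, v = worstCaseExpectation O p ε (h x)} ∧
      sInf {v | ∃ x ∈ X, v = worstCaseExpectation O p ε (h x)} ≤
        sInf {v | ∃ x ∈ X, v = ∑ b, h x b * P b} + 4 * L / c * ε := by
  refine csInf_le_csInf_and_csInf_le_add hX (m := -L) (fun x hx => ?_)
    fun x hx => expectation_le_worstCaseExpectation_le hc hcontr hP_nonneg hP_sum hP (hL x hx)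
  have := abs_sum_mul_sub_sum_mul_le (P := 0) (Q := P) (hL x hx)
  simp only [Pi.zero_apply, mul_zero, sum_const_zero, sub_zero, abs_of_nonneg (hP_nonneg _),
    hP_sum, mul_one] at this
  linarith [neg_abs_le (∑ b, h x b * P b)]

theorem measureReal_frequency_ge_le {Ω β : Type*} [MeasurableSpace Ω] [MeasurableSpace β]
    {μ : Measure Ω} [IsProbabilityMeasure μ] {ξs : ℕ → Ω → β} (hmeas : ∀ i, Measurable (ξs i))
    (hindep : iIndepFun ξs μ) {A : Set β} (hA : MeasurableSet A) {p : ℝ}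
    (hp : ∀ i, μ.real (ξs i ⁻¹' A) = p) (N : ℕ) {e : ℝ} (he : 0 ≤ e) :
    μ.real {ω | N * (p + e) ≤ ∑ i ∈ range N, A.indicator 1 (ξs i ω)} ≤
      exp (-(2 * N * e ^ 2)) := by
  set Y : ℕ → Ω → ℝ := fun i ω => A.indicator 1 (ξs i ω) - p
  have hY_indep : iIndepFun Y μ :=
    hindep.comp (fun _ b => A.indicator 1 b - p) fun _ => (measurable_const.indicator hA).sub_const _
  have hY_subG : ∀ i < N, HasSubgaussianMGF (Y i) ((‖(1 : ℝ) - 0‖₊ / 2) ^ 2) μ := by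
    intro i _
    have hmean : μ[fun ω => A.indicator (1 : β → ℝ) (ξs i ω)] = p := by
      simp_rw [← Set.indicator_comp_right, Pi.one_comp]
      rw [integral_indicator_one (hmeas i hA), hp]
    have hmem : ∀ᵐ ω ∂μ, A.indicator (1 : β → ℝ) (ξs i ω) ∈ Set.Icc 0 1 :=
      ae_of_all _ fun ω => ⟨Set.indicator_nonneg (fun _ _ => zero_le_one) _,
        Set.indicator_le_self' (fun _ _ => zero_le_one) _⟩
    have := hasSubgaussianMGF_of_mem_Icc (X := fun ω => A.indicator (1 : β → ℝ) (ξs i ω))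
      ((measurable_const.indicator hA).comp (hmeas i)).aemeasurable hmem
    rwa [hmean] at this
  have hsum : ∀ ω, ∑ i ∈ range N, Y i ω = ∑ i ∈ range N, A.indicator 1 (ξs i ω) - N * p := by
    intro ω
    simp [Y, sum_sub_distrib]
  calc μ.real {ω | N * (p + e) ≤ ∑ i ∈ range N, A.indicator 1 (ξs i ω)}
      = μ.real {ω | N * e ≤ ∑ i ∈ range N, Y i ω} := by
        congr 1; ext ω; simp only [Set.mem_ofPred_eq, hsum]; constructor <;> intro h <;> linarith
    _ ≤ exp (-(N * e) ^ 2 / (2 * N * ((‖(1 : ℝ) - 0‖₊ / 2) ^ 2 : NNReal))) :=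
        HasSubgaussianMGF.measure_sum_range_ge_le_of_iIndepFun hY_indep hY_subG (by positivity)
    _ = exp (-(2 * N * e ^ 2)) := by
        have hc : (((‖(1 : ℝ) - 0‖₊ / 2) ^ 2 : NNReal) : ℝ) = 1 / 4 := by norm_num
        rw [hc]
        rcases eq_or_ne (N : ℝ) 0 with hN | hN
        · simp [hN]
        · field_simp; ring_nf

noncomputable def empiricalPMF {Ω β : Type*} [DecidableEq β] (ξs : ℕ → Ω → β) (N : ℕ) (ω : Ω)
    (b : β) : ℝ :=
  (∑ i ∈ range N, if ξs i ω = b then 1 else 0) / N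

section Empirical

variable {Ω β : Type*} [DecidableEq β] {ξs : ℕ → Ω → β}

theorem sum_empiricalPMF_finset (N : ℕ) (ω : Ω) (A : Finset β) :
    ∑ b ∈ A, empiricalPMF ξs N ω b = (∑ i ∈ range N, (A : Set β).indicator 1 (ξs i ω)) / N := by
  simp only [empiricalPMF, ← sum_div]
  rw [sum_comm]
  congr 1
  refine sum_congr rfl fun i _ => ?_
  rw [sum_ite_eq]
  simp [Set.indicator_apply]

variable [Fintype β]

theorem sum_empiricalPMF {N : ℕ} (hN : 0 < N) (ω : Ω) : ∑ b, empiricalPMF ξs N ω b = 1 := by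
  rw [sum_empiricalPMF_finset, coe_univ]
  simp only [Set.indicator_univ, Pi.one_apply, sum_const, card_range, nsmul_eq_mul, mul_one]
  exact div_self (by positivity)

variable [MeasurableSpace Ω] [MeasurableSpace β] [MeasurableSingletonClass β] {μ : Measure Ω}
  [IsProbabilityMeasure μ]

theorem measure_tvDist_empiricalPMF_gt_le (hmeas : ∀ i, Measurable (ξs i))
    (hindep : iIndepFun ξs μ) {p : β → ℝ} (hlaw : ∀ i b, μ.real (ξs i ⁻¹' {b}) = p b)
    {N : ℕ} (hN : 0 < N) {e : ℝ} (he : 0 ≤ e) :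
    μ {ω | e < tvDist (empiricalPMF ξs N ω) p} ≤
      ENNReal.ofReal (2 ^ Fintype.card β * exp (-(2 * N * e ^ 2))) := by
  have hlawA : ∀ i (A : Finset β), μ.real (ξs i ⁻¹' A) = ∑ b ∈ A, p b := fun i A => by
    rw [← sum_measureReal_preimage_singleton A fun b _ => hmeas i (measurableSet_singleton b)]
    exact sum_congr rfl fun b _ => hlaw i b
  have hp_sum : ∑ b, p b = 1 := by simpa using (hlawA 0 univ).symm
  have hsub : {ω | e < tvDist (empiricalPMF ξs N ω) p} ⊆ ⋃ A ∈ (univ : Finset (Finset β)),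
      {ω | N * (∑ b ∈ A, p b + e) ≤ ∑ i ∈ range N, (A : Set β).indicator 1 (ξs i ω)} := by
    intro ω hω
    -- `A = {b | p b < p̂ b}` realises the total variation distance.
    rw [Set.mem_ofPred_eq, tvDist_eq_sum_filter_sub (by rw [sum_empiricalPMF hN, hp_sum]),
      sum_sub_distrib, sum_empiricalPMF_finset, lt_sub_iff_add_lt', lt_div_iff₀ (by positivity)]
      at hω
    exact Set.mem_biUnion (mem_univ _) (by rw [Set.mem_ofPred_eq]; linarith)
  calc μ {ω | e < tvDist (empiricalPMF ξs N ω) p}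
      ≤ ∑ A : Finset β,
          μ {ω | N * (∑ b ∈ A, p b + e) ≤ ∑ i ∈ range N, (A : Set β).indicator 1 (ξs i ω)} :=
        (measure_mono hsub).trans (measure_biUnion_finset_le _ _)
    _ ≤ ∑ _A : Finset β, ENNReal.ofReal (exp (-(2 * N * e ^ 2))) := by
        gcongr with A
        rw [← ofReal_measureReal]
        exact ENNReal.ofReal_le_ofReal
          (measureReal_frequency_ge_le hmeas hindep A.measurableSet (fun i => hlawA i A) N he)
    _ = ENNReal.ofReal (2 ^ Fintype.card β * exp (-(2 * N * e ^ 2))) := by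
        rw [← ENNReal.ofReal_sum_of_nonneg fun _ _ => (exp_pos _).le, sum_const, card_univ,
          Fintype.card_finset, nsmul_eq_mul, Nat.cast_pow, Nat.cast_ofNat]

end Empirical

/-- The radius `ε_TV(α)` for `N` samples on a `k`-point space, chosen so that
`2 ^ k * exp (-2 N ε²) ≤ α`. -/
noncomputable def tvRadius (k : ℕ) (α : ℝ) (N : ℕ) : ℝ :=
  √(max (k : ℝ) (2 * log (2 / α)) / N)

theorem two_pow_mul_exp_neg_tvRadius_le {k : ℕ} {a : ℝ} (ha₀ : 0 < a) (ha₄ : a ≤ 4) {N : ℕ}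
    (hN : 0 < N) : 2 ^ k * exp (-(2 * N * tvRadius k a N ^ 2)) ≤ a := by
  have hradius : 2 * N * tvRadius k a N ^ 2 = 2 * max (k : ℝ) (2 * log (2 / a)) := by
    rw [tvRadius, sq_sqrt (div_nonneg ((Nat.cast_nonneg k).trans (le_max_left _ _)) N.cast_nonneg)]
    field_simp
  have hpow : (2 : ℝ) ^ k ≤ exp k := by
    rw [← mul_one (k : ℝ), exp_nat_mul]
    exact pow_le_pow_left₀ zero_le_two (by linarith [add_one_le_exp 1]) k
  have hlog : exp (-(2 * log (2 / a))) = (a / 2) ^ 2 := by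
    rw [exp_neg, show 2 * log (2 / a) = log (2 / a) + log (2 / a) by ring, exp_add,
      exp_log (by positivity)]
    field_simp
  calc 2 ^ k * exp (-(2 * N * tvRadius k a N ^ 2))
      ≤ exp k * exp (-(k + 2 * log (2 / a))) := by
        rw [hradius]
        gcongr
        linarith [le_max_left (k : ℝ) (2 * log (2 / a)), le_max_right (k : ℝ) (2 * log (2 / a))]
    _ = (a / 2) ^ 2 := by rw [← exp_add, ← hlog]; ring_nf
    _ ≤ a := by nlinarith

theorem ae_eventually_of_measure_le_summable {Ω : Type*} [MeasurableSpace Ω] {μ : Measure Ω}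
    {q : ℕ → Ω → Prop} {α : ℕ → ℝ} (hα₀ : ∀ N, 0 ≤ α N) (hα : Summable α)
    (h : ∀ N, 0 < N → μ {ω | ¬ q N ω} ≤ ENNReal.ofReal (α N)) :
    ∀ᵐ ω ∂μ, ∀ᶠ N in atTop, q N ω := by
  have hs : ∀ N, μ {ω | 0 < N ∧ ¬ q N ω} ≤ ENNReal.ofReal (α N) := by
    intro N
    rcases N.eq_zero_or_pos with rfl | hN
    · simp
    · exact (measure_mono fun ω hω => hω.2).trans (h N hN)
  have hsum : ∑' N, μ {ω | 0 < N ∧ ¬ q N ω} ≠ ⊤ := by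
    refine ne_top_of_le_ne_top ?_ (ENNReal.tsum_le_tsum hs)
    rw [← ENNReal.ofReal_tsum_of_nonneg hα₀ hα]
    exact ENNReal.ofReal_ne_top
  filter_upwards [ae_eventually_notMem hsum] with ω hω
  filter_upwards [hω, eventually_gt_atTop 0] with N hN hN₀
  by_contra hq
  exact hN ⟨hN₀, hq⟩

theorem ae_eventually_tvDist_empiricalPMF_le {Ω β : Type*} [Fintype β] [DecidableEq β]
    [MeasurableSpace Ω] [MeasurableSpace β] [MeasurableSingletonClass β] {μ : Measure Ω}
    [IsProbabilityMeasure μ] {ξs : ℕ → Ω → β} (hmeas : ∀ i, Measurable (ξs i))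
    (hindep : iIndepFun ξs μ) {p : β → ℝ} (hlaw : ∀ i b, μ.real (ξs i ⁻¹' {b}) = p b)
    {α : ℕ → ℝ} (hα : ∀ N, α N ∈ Set.Ioo 0 1) (hα_sum : Summable α) :
    ∀ᵐ ω ∂μ, ∀ᶠ N in atTop,
      tvDist (empiricalPMF ξs N ω) p ≤ tvRadius (Fintype.card β) (α N) N := by
  refine ae_eventually_of_measure_le_summable (fun N => (hα N).1.le) hα_sum fun N hN => ?_
  simp only [not_le]
  exact (measure_tvDist_empiricalPMF_gt_le hmeas hindep hlaw hN (sqrt_nonneg _)).trans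
    (ENNReal.ofReal_le_ofReal
      (two_pow_mul_exp_neg_tvRadius_le (hα N).1 (by linarith [(hα N).2]) hN))

theorem stmt11_general {Ξ : Type*} [Fintype Ξ] [DecidableEq Ξ]
    [MeasurableSpace Ξ] [MeasurableSingletonClass Ξ]
    {n : ℕ} (X : Set (Fin n → ℝ)) (hX : X.Nonempty)
    (h : (Fin n → ℝ) → Ξ → ℝ) (L : ℝ)
    (hL : ∀ x ∈ X, ∀ ξ : Ξ, |h x ξ| ≤ L)
    -- true distribution P on Ξ
    (P : Ξ → ℝ) (hP_nonneg : ∀ ξ, 0 ≤ P ξ) (hP_sum : ∑ ξ, P ξ = 1)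
    -- noise conditional distribution, uniformly diagonally dominant
    (O : Ξ → Ξ → ℝ) (hO_nonneg : ∀ ξ' ξ, 0 ≤ O ξ' ξ) (hO_sum : ∀ ξ, ∑ ξ', O ξ' ξ = 1)
    (hdd : ∀ ξ ξ₁ ξ₂, ξ₁ ≠ ξ₂ → (Fintype.card Ξ : ℝ) * O ξ₂ ξ₁ < O ξ ξ)
    -- confidence levels and radii
    (α : ℕ → ℝ) (hα : ∀ N, α N ∈ Set.Ioo (0:ℝ) 1)
    (hα_sum : Summable α)
    (ε : ℕ → ℝ)
    (hε : ∀ N : ℕ, ε N =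
      Real.sqrt (max (Fintype.card Ξ : ℝ) (2 * Real.log (2 / α N)) / N))
    (hε0 : Filter.Tendsto ε Filter.atTop (nhds 0))
    -- i.i.d. noisy samples on a probability space, with law P' = O⋆P
    {Ω : Type*} [MeasurableSpace Ω] (μ : Measure Ω) [IsProbabilityMeasure μ]
    (ξs : ℕ → Ω → Ξ) (hmeas : ∀ i, Measurable (ξs i))
    (hlaw : ∀ i, ∀ ξ' : Ξ, μ {ω | ξs i ω = ξ'} = ENNReal.ofReal (∑ ξ, O ξ' ξ * P ξ))
    (hindep : ProbabilityTheory.iIndepFun ξs μ)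
    -- empirical distribution of the first N noisy samples
    (Phat : ℕ → Ω → Ξ → ℝ)
    (hPhat : ∀ N ω ξ, Phat N ω ξ =
      (∑ i ∈ Finset.range N, if ξs i ω = ξ then (1:ℝ) else 0) / N)
    -- DRO optimal values and the true optimal value
    (Jhat : ℕ → Ω → ℝ)
    (hJhat : ∀ N ω, Jhat N ω = sInf {v : ℝ | ∃ x ∈ X,
      v = sSup {u : ℝ | ∃ Q : Ξ → ℝ, (∀ ξ, 0 ≤ Q ξ) ∧ (∑ ξ, Q ξ = 1) ∧
        (1/2) * ∑ ξ', |(∑ ξ, O ξ' ξ * Q ξ) - Phat N ω ξ'| ≤ ε N ∧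
        u = ∑ ξ, h x ξ * Q ξ}})
    (Jstar : ℝ) (hJstar : Jstar = sInf {v : ℝ | ∃ x ∈ X, v = ∑ ξ, h x ξ * P ξ}) :
    ∀ᵐ ω ∂μ, Filter.Tendsto (fun N => Jhat N ω) Filter.atTop (nhds Jstar) := by
  obtain ⟨c, hc, hcontr⟩ := exists_pos_mul_sum_abs_le_sum_abs_mulVec (O := O) hO_nonneg hO_sum
    fun ξ ξ' hne => (hdd ξ ξ ξ' hne).le
  have hPhat_eq : Phat = empiricalPMF ξs := by ext N ω ξ; exact hPhat N ω ξ
  have hlaw_real : ∀ i ξ', μ.real (ξs i ⁻¹' {ξ'}) = (O *ᵥ P) ξ' := fun i ξ' => by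
    rw [measureReal_def, show μ (ξs i ⁻¹' {ξ'}) = _ from hlaw i ξ',
      ENNReal.toReal_ofReal (sum_nonneg fun ξ _ => mul_nonneg (hO_nonneg _ _) (hP_nonneg _))]
    rfl
  have hδ : Tendsto (fun N => 4 * L / c * ε N) atTop (nhds 0) := by
    simpa using hε0.const_mul (4 * L / c)
  filter_upwards [ae_eventually_tvDist_empiricalPMF_le hmeas hindep hlaw_real hα hα_sum]
    with ω hω
  have hsandwich : ∀ᶠ N in atTop, Jstar ≤ Jhat N ω ∧ Jhat N ω ≤ Jstar + 4 * L / c * ε N := by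
    filter_upwards [hω] with N hN
    rw [hJhat, hJstar]
    exact optimalValue_sandwich hX hL hc hcontr hP_nonneg hP_sum
      (by rwa [tvDist_comm, hε, hPhat_eq])
  exact tendsto_of_tendsto_of_tendsto_of_le_of_le' tendsto_const_nhds
    (by simpa using tendsto_const_nhds.add hδ) (hsandwich.mono fun _ h => h.1)
    (hsandwich.mono fun _ h => h.2)

/-- asymptotic consistency of the optimal values of the
distributionally-robust optimization problems with noisy data. -/
theorem stmt11 {Ξ : Type*} [Fintype Ξ] [DecidableEq Ξ] [Nonempty Ξ]
    [MeasurableSpace Ξ] [MeasurableSingletonClass Ξ]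
    {n : ℕ} (X : Set (Fin n → ℝ)) (hX : X.Nonempty)
    (h : (Fin n → ℝ) → Ξ → ℝ) (L : ℝ)
    (hL : ∀ x ∈ X, ∀ ξ : Ξ, |h x ξ| ≤ L)
    -- true distribution P on Ξ
    (P : Ξ → ℝ) (hP_nonneg : ∀ ξ, 0 ≤ P ξ) (hP_sum : ∑ ξ, P ξ = 1)
    -- noise conditional distribution, uniformly diagonally dominant
    (O : Ξ → Ξ → ℝ) (hO_nonneg : ∀ ξ' ξ, 0 ≤ O ξ' ξ) (hO_sum : ∀ ξ, ∑ ξ', O ξ' ξ = 1)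
    (hdd : ∀ ξ ξ₁ ξ₂, ξ₁ ≠ ξ₂ → (Fintype.card Ξ : ℝ) * O ξ₂ ξ₁ < O ξ ξ)
    -- confidence levels and radii
    (α : ℕ → ℝ) (hα : ∀ N, α N ∈ Set.Ioo (0:ℝ) 1)
    (hα_sum : Summable α)
    (ε : ℕ → ℝ)
    (hε : ∀ N : ℕ, ε N =
      Real.sqrt (max (Fintype.card Ξ : ℝ) (2 * Real.log (2 / α N)) / N))
    (hε0 : Filter.Tendsto ε Filter.atTop (nhds 0))
    -- i.i.d. noisy samples on a probability space, with law P' = O⋆P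
    {Ω : Type*} [MeasurableSpace Ω] (μ : Measure Ω) [IsProbabilityMeasure μ]
    (ξs : ℕ → Ω → Ξ) (hmeas : ∀ i, Measurable (ξs i))
    (hlaw : ∀ i, ∀ ξ' : Ξ, μ {ω | ξs i ω = ξ'} = ENNReal.ofReal (∑ ξ, O ξ' ξ * P ξ))
    (hindep : ProbabilityTheory.iIndepFun ξs μ)
    -- empirical distribution of the first N noisy samples
    (Phat : ℕ → Ω → Ξ → ℝ)
    (hPhat : ∀ N ω ξ, Phat N ω ξ =
      (∑ i ∈ Finset.range N, if ξs i ω = ξ then (1:ℝ) else 0) / N)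
    -- DRO optimal values and the true optimal value
    (Jhat : ℕ → Ω → ℝ)
    (hJhat : ∀ N ω, Jhat N ω = sInf {v : ℝ | ∃ x ∈ X,
      v = sSup {u : ℝ | ∃ Q : Ξ → ℝ, (∀ ξ, 0 ≤ Q ξ) ∧ (∑ ξ, Q ξ = 1) ∧
        (1/2) * ∑ ξ', |(∑ ξ, O ξ' ξ * Q ξ) - Phat N ω ξ'| ≤ ε N ∧
        u = ∑ ξ, h x ξ * Q ξ}})
    (Jstar : ℝ) (hJstar : Jstar = sInf {v : ℝ | ∃ x ∈ X, v = ∑ ξ, h x ξ * P ξ}) :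
    ∀ᵐ ω ∂μ, Filter.Tendsto (fun N => Jhat N ω) Filter.atTop (nhds Jstar) :=
  stmt11_general X hX h L hL P hP_nonneg hP_sum O hO_nonneg hO_sum hdd α hα hα_sum ε hε hε0 μ ξs
    hmeas hlaw hindep Phat hPhat Jhat hJhat Jstar hJstar
end

section
/- Deterministic sandwich bound: if d_TV(O⋆P, P̂') ≤ ε (so P is in the ambiguity set B_ε = {Q : d_TV(O⋆Q, P̂') ≤ ε}), O is uniformly diagonally dominant with constant c₀(O), and |h(x,ξ)| ≤ L everywhere, then J* ≤ Ĵ(ε) ≤ J* + 4L·c₀(O)·ε, where J* = inf_{x∈X} E^P[h(x,ξ)] and Ĵ(ε) = inf_{x∈X} sup_{Q∈B_ε} E^Q[h(x,ξ)]. -/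
open Finset

/-- deterministic sandwich bound J* ≤ Ĵ(ε) ≤ J* + 4L·c₀(O)·ε. -/
theorem stmt12 {Ξ : Type*} [Fintype Ξ] [DecidableEq Ξ] [Nonempty Ξ]
    {n : ℕ} (X : Set (Fin n → ℝ)) (hX : X.Nonempty)
    (h : (Fin n → ℝ) → Ξ → ℝ) (L : ℝ) (hL : ∀ x ξ, |h x ξ| ≤ L)
    (P : Ξ → ℝ) (hP_nonneg : ∀ ξ, 0 ≤ P ξ) (hP_sum : ∑ ξ, P ξ = 1)
    (O : Ξ → Ξ → ℝ) (hO_nonneg : ∀ ξ' ξ, 0 ≤ O ξ' ξ) (hO_sum : ∀ ξ, ∑ ξ', O ξ' ξ = 1)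
    (dmin dmax : ℝ)
    (hmin : ∀ ξ, dmin ≤ O ξ ξ)
    (hmax : ∀ ξ ξ', ξ ≠ ξ' → O ξ' ξ ≤ dmax)
    (hdd : (Fintype.card Ξ : ℝ) * dmax < dmin)   -- uniform diagonal dominance
    (c₀ : ℝ) (hc₀ : c₀ = 1 / (dmin - (Fintype.card Ξ : ℝ) * dmax))
    (Phat : Ξ → ℝ) (hPhat_nonneg : ∀ ξ, 0 ≤ Phat ξ) (hPhat_sum : ∑ ξ, Phat ξ = 1)
    (ε : ℝ)
    -- P lies in the ambiguity set: d_TV(O⋆P, P̂') ≤ ε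
    (hP_in : (1/2) * ∑ ξ', |(∑ ξ, O ξ' ξ * P ξ) - Phat ξ'| ≤ ε)
    (Jstar Jhat : ℝ)
    (hJstar : Jstar = sInf {v : ℝ | ∃ x ∈ X, v = ∑ ξ, h x ξ * P ξ})
    (hJhat : Jhat = sInf {v : ℝ | ∃ x ∈ X,
      v = sSup {u : ℝ | ∃ Q : Ξ → ℝ, (∀ ξ, 0 ≤ Q ξ) ∧ (∑ ξ, Q ξ = 1) ∧
        (1/2) * ∑ ξ', |(∑ ξ, O ξ' ξ * Q ξ) - Phat ξ'| ≤ ε ∧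
        u = ∑ ξ, h x ξ * Q ξ}}) :
    Jstar ≤ Jhat ∧ Jhat ≤ Jstar + 4 * L * c₀ * ε := by
  classical
  set N : ℝ := (Fintype.card Ξ : ℝ) with hN
  have hd_pos : 0 < dmin - N * dmax := by linarith
  have hc₀_pos : 0 < c₀ := by rw [hc₀]; positivity
  have hε_nonneg : 0 ≤ ε := by
    refine le_trans ?_ hP_in
    positivity
  have hL0 : 0 ≤ L := le_trans (abs_nonneg _) (hL hX.choose (Classical.arbitrary Ξ))
  -- key contraction bound
  have key : ∀ Q : Ξ → ℝ, (∀ ξ, 0 ≤ Q ξ) → (∑ ξ, Q ξ = 1) →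
      ((1/2) * ∑ ξ', |(∑ ξ, O ξ' ξ * Q ξ) - Phat ξ'| ≤ ε) →
      ∑ ξ, |Q ξ - P ξ| ≤ c₀ * (4 * ε) := by
    intro Q hQ0 hQ1 hQin
    set v : Ξ → ℝ := fun ξ => Q ξ - P ξ with hv
    set S : ℝ := ∑ ξ, |v ξ| with hS
    have hS0 : 0 ≤ S := Finset.sum_nonneg fun _ _ => abs_nonneg _
    have h1 : ∑ ξ', |∑ ξ, O ξ' ξ * v ξ| ≤ 4 * ε := by
      have hterm : ∀ ξ', |∑ ξ, O ξ' ξ * v ξ| ≤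
          |(∑ ξ, O ξ' ξ * Q ξ) - Phat ξ'| + |(∑ ξ, O ξ' ξ * P ξ) - Phat ξ'| := by
        intro ξ'
        have : (∑ ξ, O ξ' ξ * v ξ) =
            ((∑ ξ, O ξ' ξ * Q ξ) - Phat ξ') - ((∑ ξ, O ξ' ξ * P ξ) - Phat ξ') := by
          simp only [hv, mul_sub]
          rw [Finset.sum_sub_distrib]
          ring
        rw [this]
        exact abs_sub _ _
      calc ∑ ξ', |∑ ξ, O ξ' ξ * v ξ|
          ≤ ∑ ξ', (|(∑ ξ, O ξ' ξ * Q ξ) - Phat ξ'| + |(∑ ξ, O ξ' ξ * P ξ) - Phat ξ'|) :=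
            Finset.sum_le_sum fun ξ' _ => hterm ξ'
        _ = (∑ ξ', |(∑ ξ, O ξ' ξ * Q ξ) - Phat ξ'|) +
            (∑ ξ', |(∑ ξ, O ξ' ξ * P ξ) - Phat ξ'|) := Finset.sum_add_distrib
        _ ≤ 2 * ε + 2 * ε := add_le_add (by linarith) (by linarith)
        _ = 4 * ε := by ring
    by_cases hdmax : 0 ≤ dmax
    · -- contraction via diagonal dominance
      have h2 : (dmin - N * dmax) * S ≤ ∑ ξ', |∑ ξ, O ξ' ξ * v ξ| := by
        have hterm : ∀ ξ', dmin * |v ξ'| - dmax * S ≤ |∑ ξ, O ξ' ξ * v ξ| := by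
          intro ξ'
          have hsplit : (∑ ξ, O ξ' ξ * v ξ) =
              O ξ' ξ' * v ξ' + ∑ ξ ∈ univ.erase ξ', O ξ' ξ * v ξ :=
            (Finset.add_sum_erase univ (fun ξ => O ξ' ξ * v ξ) (mem_univ ξ')).symm
          have hB : |∑ ξ ∈ univ.erase ξ', O ξ' ξ * v ξ| ≤ dmax * S := by
            calc |∑ ξ ∈ univ.erase ξ', O ξ' ξ * v ξ|
                ≤ ∑ ξ ∈ univ.erase ξ', |O ξ' ξ * v ξ| := Finset.abs_sum_le_sum_abs _ _
              _ ≤ ∑ ξ ∈ univ.erase ξ', dmax * |v ξ| := by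
                  refine Finset.sum_le_sum fun ξ hξ => ?_
                  rw [abs_mul, abs_of_nonneg (hO_nonneg ξ' ξ)]
                  exact mul_le_mul_of_nonneg_right
                    (hmax ξ ξ' (Finset.ne_of_mem_erase hξ)) (abs_nonneg _)
              _ ≤ ∑ ξ, dmax * |v ξ| := by
                  refine Finset.sum_le_sum_of_subset_of_nonneg (Finset.erase_subset _ _) ?_
                  intro ξ _ _
                  exact mul_nonneg hdmax (abs_nonneg _)
              _ = dmax * S := by rw [hS, Finset.mul_sum]
          have hA : dmin * |v ξ'| ≤ |O ξ' ξ' * v ξ'| := by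
            rw [abs_mul, abs_of_nonneg (hO_nonneg ξ' ξ')]
            exact mul_le_mul_of_nonneg_right (hmin ξ') (abs_nonneg _)
          have htri : |O ξ' ξ' * v ξ'| - |∑ ξ ∈ univ.erase ξ', O ξ' ξ * v ξ| ≤
              |∑ ξ, O ξ' ξ * v ξ| := by
            rw [hsplit]
            have := abs_add_le (O ξ' ξ' * v ξ' + ∑ ξ ∈ univ.erase ξ', O ξ' ξ * v ξ)
              (-(∑ ξ ∈ univ.erase ξ', O ξ' ξ * v ξ))
            simp only [add_neg_cancel_right, abs_neg] at this
            linarith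
          linarith
        have h3 : ∑ ξ' : Ξ, (dmin * |v ξ'| - dmax * S) ≤ ∑ ξ', |∑ ξ, O ξ' ξ * v ξ| :=
          Finset.sum_le_sum fun ξ' _ => hterm ξ'
        have h4 : ∑ ξ' : Ξ, (dmin * |v ξ'| - dmax * S) = dmin * S - N * (dmax * S) := by
          rw [Finset.sum_sub_distrib, ← Finset.mul_sum, ← hS, Finset.sum_const,
            Finset.card_univ, nsmul_eq_mul, ← hN]
        nlinarith [h3, h4]
      have : (dmin - N * dmax) * S ≤ 4 * ε := le_trans h2 h1
      rw [hc₀]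
      rw [div_mul_eq_mul_div, one_mul, le_div_iff₀ hd_pos]
      linarith [this]
    · -- dmax < 0 : Ξ is a subsingleton, so Q = P
      have hsub : ∀ a b : Ξ, a = b := by
        intro a b
        by_contra hab
        exact hdmax (le_trans (hO_nonneg b a) (hmax a b hab))
      obtain ⟨ξ₀⟩ := (inferInstance : Nonempty Ξ)
      have huniv : (univ : Finset Ξ) = {ξ₀} := by
        ext ξ; simp [hsub ξ ξ₀]
      have hQP : ∀ ξ, Q ξ = P ξ := by
        intro ξ
        have h1 : Q ξ₀ = 1 := by rw [← hQ1, huniv, Finset.sum_singleton]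
        have h2 : P ξ₀ = 1 := by rw [← hP_sum, huniv, Finset.sum_singleton]
        rw [hsub ξ ξ₀, h1, h2]
      have hS0' : S = 0 := by
        rw [hS]
        refine Finset.sum_eq_zero fun ξ _ => ?_
        simp [hv, hQP ξ]
      rw [hS0']
      positivity
  -- expectation difference bound
  have expbd : ∀ (x : Fin n → ℝ) (Q : Ξ → ℝ), (∀ ξ, 0 ≤ Q ξ) → (∑ ξ, Q ξ = 1) →
      ((1/2) * ∑ ξ', |(∑ ξ, O ξ' ξ * Q ξ) - Phat ξ'| ≤ ε) →
      |(∑ ξ, h x ξ * Q ξ) - ∑ ξ, h x ξ * P ξ| ≤ 4 * L * c₀ * ε := by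
    intro x Q hQ0 hQ1 hQin
    have hdiff : (∑ ξ, h x ξ * Q ξ) - ∑ ξ, h x ξ * P ξ = ∑ ξ, h x ξ * (Q ξ - P ξ) := by
      rw [← Finset.sum_sub_distrib]
      congr 1; funext ξ; ring
    rw [hdiff]
    calc |∑ ξ, h x ξ * (Q ξ - P ξ)| ≤ ∑ ξ, |h x ξ * (Q ξ - P ξ)| :=
          Finset.abs_sum_le_sum_abs _ _
      _ ≤ ∑ ξ, L * |Q ξ - P ξ| := by
          refine Finset.sum_le_sum fun ξ _ => ?_
          rw [abs_mul]
          exact mul_le_mul_of_nonneg_right (hL x ξ) (abs_nonneg _)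
      _ = L * ∑ ξ, |Q ξ - P ξ| := by rw [Finset.mul_sum]
      _ ≤ L * (c₀ * (4 * ε)) := mul_le_mul_of_nonneg_left (key Q hQ0 hQ1 hQin) hL0
      _ = 4 * L * c₀ * ε := by ring
  -- setup for inf/sup arguments
  set EP : (Fin n → ℝ) → ℝ := fun x => ∑ ξ, h x ξ * P ξ with hEP
  have hEPbd : ∀ x, |EP x| ≤ L := by
    intro x
    calc |EP x| ≤ ∑ ξ, |h x ξ * P ξ| := Finset.abs_sum_le_sum_abs _ _
      _ ≤ ∑ ξ, L * P ξ := by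
          refine Finset.sum_le_sum fun ξ _ => ?_
          rw [abs_mul, abs_of_nonneg (hP_nonneg ξ)]
          exact mul_le_mul_of_nonneg_right (hL x ξ) (hP_nonneg ξ)
      _ = L := by rw [← Finset.mul_sum, hP_sum, mul_one]
  set Sx : (Fin n → ℝ) → Set ℝ := fun x =>
    {u : ℝ | ∃ Q : Ξ → ℝ, (∀ ξ, 0 ≤ Q ξ) ∧ (∑ ξ, Q ξ = 1) ∧
      (1/2) * ∑ ξ', |(∑ ξ, O ξ' ξ * Q ξ) - Phat ξ'| ≤ ε ∧
      u = ∑ ξ, h x ξ * Q ξ} with hSx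
  have hmem : ∀ x, EP x ∈ Sx x := fun x => ⟨P, hP_nonneg, hP_sum, hP_in, rfl⟩
  have hub : ∀ x, ∀ u ∈ Sx x, u ≤ EP x + 4 * L * c₀ * ε := by
    rintro x u ⟨Q, hQ0, hQ1, hQin, rfl⟩
    have := expbd x Q hQ0 hQ1 hQin
    have := abs_le.mp this
    linarith [this.2]
  have hbddA : ∀ x, BddAbove (Sx x) := fun x => ⟨EP x + 4 * L * c₀ * ε, hub x⟩
  have hsup_ge : ∀ x, EP x ≤ sSup (Sx x) := fun x => le_csSup (hbddA x) (hmem x)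
  have hsup_le : ∀ x, sSup (Sx x) ≤ EP x + 4 * L * c₀ * ε := fun x =>
    csSup_le ⟨EP x, hmem x⟩ (hub x)
  set T1 : Set ℝ := {v : ℝ | ∃ x ∈ X, v = EP x} with hT1
  set T2 : Set ℝ := {v : ℝ | ∃ x ∈ X, v = sSup (Sx x)} with hT2
  have hT1ne : T1.Nonempty := ⟨EP hX.choose, hX.choose, hX.choose_spec, rfl⟩
  have hT2ne : T2.Nonempty := ⟨sSup (Sx hX.choose), hX.choose, hX.choose_spec, rfl⟩
  have hT1bdd : BddBelow T1 := by
    refine ⟨-L, ?_⟩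
    rintro v ⟨x, _, rfl⟩
    linarith [(abs_le.mp (hEPbd x)).1]
  have hT2bdd : BddBelow T2 := by
    refine ⟨-L, ?_⟩
    rintro v ⟨x, _, rfl⟩
    linarith [(abs_le.mp (hEPbd x)).1, hsup_ge x]
  have hJstar' : Jstar = sInf T1 := hJstar
  have hJhat' : Jhat = sInf T2 := hJhat
  constructor
  · rw [hJstar', hJhat']
    refine le_csInf hT2ne ?_
    rintro v ⟨x, hx, rfl⟩
    exact le_trans (csInf_le hT1bdd ⟨x, hx, rfl⟩) (hsup_ge x)
  · rw [hJstar', hJhat']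
    have : ∀ v ∈ T1, sInf T2 - 4 * L * c₀ * ε ≤ v := by
      rintro v ⟨x, hx, rfl⟩
      have h1 : sInf T2 ≤ sSup (Sx x) := csInf_le hT2bdd ⟨x, hx, rfl⟩
      linarith [hsup_le x]
    have := le_csInf hT1ne this
    linarith
end
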